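/- Let A₁, …, A_m be n×n real matrices, u, v ∈ ℝ^m, and let K = L Lᵗ for an n×n real matrix L. Set P = I + (v ⊗ L)ᵗ · bdiag(A₁⁻¹, …, A_m⁻¹) · (u ⊗ L), assuming each Aᵢ is invertible. Then det( bdiag(A₁, …, A_m) + (u vᵗ) ⊗ K ) = (∏ᵢ det Aᵢ) · det P. -/

import Mathlib

/-!
By the mixed-product property of `⊗`, `(u vᵗ) ⊗ (L Lᵗ) = (u ⊗ L) (v ⊗ L)ᵗ`, so the matrix
determinant lemma `det (B + M N) = det B · det (1 + N B⁻¹ M)` applies with `B = bdiag (Aᵢ)`.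
Since `bdiag` is Mathlib's `blockDiagonal` up to a simultaneous reindexing, `det B = ∏ᵢ det Aᵢ`
and `B⁻¹ = bdiag (Aᵢ⁻¹)`.
-/

open Matrix Kronecker

/-- Block-diagonal matrix with `n × n` diagonal blocks `D 0, …, D (m-1)`. -/
noncomputable def bdiag {n m : ℕ} (D : Fin m → Matrix (Fin n) (Fin n) ℝ) :
    Matrix (Fin m × Fin n) (Fin m × Fin n) ℝ :=
  Matrix.of fun p q => if p.1 = q.1 then D p.1 p.2 q.2 else 0

theorem Matrix.vecMulVec_kronecker_mul_transpose {R ι κ l : Type*} [CommSemiring R]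
    [Fintype κ] [Unique l] (u v : ι → R) (L : Matrix κ κ R) :
    vecMulVec u v ⊗ₖ (L * Lᵀ) = (replicateCol l u ⊗ₖ L) * (replicateCol l v ⊗ₖ L)ᵀ := by
  rw [← kroneckerMap_transpose, transpose_replicateCol, ← mul_kronecker_mul, vecMulVec_eq l]

section bdiag

variable {n m : ℕ}

theorem bdiag_eq_submatrix_blockDiagonal (D : Fin m → Matrix (Fin n) (Fin n) ℝ) :
    bdiag D = (blockDiagonal D).submatrix (Equiv.prodComm _ _) (Equiv.prodComm _ _) := by
  ext p q
  simp [bdiag, blockDiagonal]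

theorem det_bdiag (D : Fin m → Matrix (Fin n) (Fin n) ℝ) : (bdiag D).det = ∏ i, (D i).det := by
  rw [bdiag_eq_submatrix_blockDiagonal, det_submatrix_equiv_self, det_blockDiagonal]

theorem bdiag_mul_bdiag (D E : Fin m → Matrix (Fin n) (Fin n) ℝ) :
    bdiag D * bdiag E = bdiag (D * E) := by
  rw [bdiag_eq_submatrix_blockDiagonal, bdiag_eq_submatrix_blockDiagonal,
    bdiag_eq_submatrix_blockDiagonal, submatrix_mul_equiv, ← blockDiagonal_mul]
  rfl

theorem bdiag_one : bdiag (1 : Fin m → Matrix (Fin n) (Fin n) ℝ) = 1 := by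
  rw [bdiag_eq_submatrix_blockDiagonal, blockDiagonal_one, submatrix_one_equiv]

theorem bdiag_inv {D : Fin m → Matrix (Fin n) (Fin n) ℝ} (hD : ∀ i, IsUnit (D i).det) :
    bdiag (fun i => (D i)⁻¹) = (bdiag D)⁻¹ := by
  refine (inv_eq_right_inv ?_).symm
  rw [bdiag_mul_bdiag, ← bdiag_one]
  congr 1
  funext i
  exact mul_nonsing_inv _ (hD i)

theorem isUnit_det_bdiag {D : Fin m → Matrix (Fin n) (Fin n) ℝ} (hD : ∀ i, IsUnit (D i).det) :
    IsUnit (bdiag D).det := by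
  rw [det_bdiag]
  exact IsUnit.prod_univ_iff.mpr hD

end bdiag

/-- Determinant of a quasi-Kronecker matrix: if each `Aᵢ` is invertible, `K = L Lᵗ`,
and `P = I + (v ⊗ L)ᵗ · bdiag(Aᵢ⁻¹) · (u ⊗ L)`, then
`det(bdiag(A₁,…,A_m) + (u vᵗ) ⊗ K) = (∏ᵢ det Aᵢ) · det P`. -/
theorem QK_det (n m : ℕ) (A : Fin m → Matrix (Fin n) (Fin n) ℝ)
    (hA : ∀ i, IsUnit (A i).det)
    (u v : Fin m → ℝ) (L K : Matrix (Fin n) (Fin n) ℝ) (hK : K = L * Lᵀ)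
    (P : Matrix (Unit × Fin n) (Unit × Fin n) ℝ)
    (hP : P = 1 + ((Matrix.replicateCol Unit v) ⊗ₖ L)ᵀ * bdiag (fun i => (A i)⁻¹) *
      ((Matrix.replicateCol Unit u) ⊗ₖ L)) :
    (bdiag A + (Matrix.vecMulVec u v) ⊗ₖ K).det = (∏ i, (A i).det) * P.det := by
  rw [hK, hP, vecMulVec_kronecker_mul_transpose (l := Unit), det_add_mul _ _ (isUnit_det_bdiag hA),
    det_bdiag, bdiag_inv hA]
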